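/- arXiv:1606.00313 — 6 statements merged into one kernel-verified Lean document; each statement's English description precedes it below -/
import Mathlib

section
/- Let K ≥ 1 be an integer, Π a finite nonempty set, A : Π → ℝ, and y : Π → {1,…,K}. Let p be a probability distribution on a finite set D ⊆ ℝ^K. Let c and c′ be independent random vectors each distributed according to p, and let δ be uniform on {−1,1}, independent of (c, c′). Then min_{i∈{1,…,K}} E_{c∼p}[ c(i) + sup_{π∈Π}( A_π − c(y(π)) ) ] ≤ E[ sup_{π∈Π}( A_π + δ·( c′(y(π)) − c(y(π)) ) ) ]. -/
open MeasureTheory ProbabilityTheory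

/-- The law of a single Rademacher (uniform `{-1,1}`-valued) real random variable. -/
noncomputable def signLaw : Measure ℝ :=
  (2⁻¹ : ENNReal) • (Measure.dirac (-1) + Measure.dirac 1)

/-- The measure on `ℝ^K` corresponding to a probability distribution `p`
supported on a finite set `D` of vectors. -/
noncomputable def vecMeas {K : ℕ} (D : Finset (Fin K → ℝ)) (p : (Fin K → ℝ) → ℝ) :
    Measure (Fin K → ℝ) :=
  ∑ v ∈ D, ENNReal.ofReal (p v) • Measure.dirac v

/-!
Write `h v w = sup_π (A π - v (y π) + w (y π))`. Averaging over the sign `δ`, the right-hand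
side is the mean of `h c c'` and `h c' c` under the law of `(c, c')`, which is
exchangeable, so it equals `E h(c, c')`. For fixed `v`, a policy `π_v` maximising
`A π - v (y π)` gives `h v w ≥ sup_π (A π - v (y π)) + w (y π_v)`; averaging over `w`, the
mean of the coordinate `y π_v` is at least the smallest mean coordinate `min_i E c(i)`.
-/

open Finset

theorem exists_mem_sup'_add_le_sup'_add {α P : Type*} [LinearOrder α] [Add α] {s : Finset P}
    (hs : s.Nonempty) (a : P → α) :
    ∃ π₀ ∈ s, ∀ g : P → α, s.sup' hs a + g π₀ ≤ s.sup' hs fun π => a π + g π := by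
  obtain ⟨π₀, hπ₀, hmax⟩ := s.exists_mem_eq_sup' hs a
  exact ⟨π₀, hπ₀, fun g => hmax ▸ s.le_sup' (fun π => a π + g π) hπ₀⟩

theorem sum_sum_mul_mul_half_add_swap {X : Type*} (D : Finset X) (p : X → ℝ) (h : X → X → ℝ) :
    ∑ v ∈ D, ∑ w ∈ D, p v * p w * (2⁻¹ * (h w v + h v w))
      = ∑ v ∈ D, ∑ w ∈ D, p v * p w * h v w := by
  have hswap : ∑ v ∈ D, ∑ w ∈ D, p v * p w * h w v = ∑ v ∈ D, ∑ w ∈ D, p v * p w * h v w := by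
    rw [sum_comm]
    exact sum_congr rfl fun _ _ => sum_congr rfl fun _ _ => by ring
  have hsplit : ∑ v ∈ D, ∑ w ∈ D, p v * p w * (2⁻¹ * (h w v + h v w))
      = 2⁻¹ * ∑ v ∈ D, ∑ w ∈ D, p v * p w * h w v
        + 2⁻¹ * ∑ v ∈ D, ∑ w ∈ D, p v * p w * h v w := by
    simp only [mul_sum, ← sum_add_distrib]
    exact sum_congr rfl fun _ _ => sum_congr rfl fun _ _ => by ring
  rw [hsplit, hswap]
  ring

theorem sum_mul_add_const_of_sum_eq_one {X : Type*} {D : Finset X} {p : X → ℝ}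
    (hp1 : ∑ v ∈ D, p v = 1) (f : X → ℝ) (c : ℝ) :
    ∑ v ∈ D, p v * (f v + c) = ∑ v ∈ D, p v * f v + c := by
  simp only [mul_add, sum_add_distrib, ← sum_mul, hp1, one_mul]

theorem inf'_sum_mul_add_le_sum_sum {ι : Type*} [Fintype ι] (hι : (univ : Finset ι).Nonempty)
    {D : Finset (ι → ℝ)} {p : (ι → ℝ) → ℝ} (hp0 : ∀ v ∈ D, 0 ≤ p v) (hp1 : ∑ v ∈ D, p v = 1)
    {s : (ι → ℝ) → ℝ} {h : (ι → ℝ) → (ι → ℝ) → ℝ}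
    (hsh : ∀ v ∈ D, ∃ i, ∀ w ∈ D, s v + w i ≤ h v w) :
    univ.inf' hι (fun i => ∑ v ∈ D, p v * (v i + s v))
      ≤ ∑ v ∈ D, ∑ w ∈ D, p v * p w * h v w := by
  obtain ⟨i₀, -, hi₀⟩ := univ.exists_mem_eq_inf' hι fun i => ∑ w ∈ D, p w * w i
  set m := ∑ w ∈ D, p w * w i₀
  have hrow : ∀ v ∈ D, s v + m ≤ ∑ w ∈ D, p w * h v w := by
    intro v hv
    obtain ⟨i, hi⟩ := hsh v hv
    calc s v + m ≤ s v + ∑ w ∈ D, p w * w i := by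
          gcongr; exact hi₀ ▸ univ.inf'_le _ (mem_univ i)
      _ = ∑ w ∈ D, p w * (w i + s v) := by rw [sum_mul_add_const_of_sum_eq_one hp1, add_comm]
      _ ≤ ∑ w ∈ D, p w * h v w :=
          sum_le_sum fun w hw => mul_le_mul_of_nonneg_left (by linarith [hi w hw]) (hp0 w hw)
  calc univ.inf' hι (fun i => ∑ v ∈ D, p v * (v i + s v))
      ≤ ∑ v ∈ D, p v * (v i₀ + s v) := univ.inf'_le _ (mem_univ i₀)
    _ = ∑ v ∈ D, p v * (s v + m) := by
        rw [sum_mul_add_const_of_sum_eq_one hp1]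
        simp only [mul_add, sum_add_distrib]
        ring
    _ ≤ ∑ v ∈ D, p v * ∑ w ∈ D, p w * h v w :=
        sum_le_sum fun v hv => mul_le_mul_of_nonneg_left (hrow v hv) (hp0 v hv)
    _ = ∑ v ∈ D, ∑ w ∈ D, p v * p w * h v w := by simp_rw [mul_sum, mul_assoc]

section FiniteLaws

theorem integrable_prod_of_forall_integrable {α β : Type*} [MeasurableSpace α]
    [MeasurableSpace β] {μ : Measure α} {ν : Measure β} [SFinite ν]
    (hμ : ∀ f : α → ℝ, AEStronglyMeasurable f μ → Integrable f μ)
    (hν : ∀ g : β → ℝ, AEStronglyMeasurable g ν → Integrable g ν)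
    (f : α × β → ℝ) (hf : AEStronglyMeasurable f (μ.prod ν)) : Integrable f (μ.prod ν) :=
  (integrable_prod_iff hf).2
    ⟨hf.prodMk_left.mono fun _ hx => hν _ hx, hμ _ hf.norm.integral_prod_right'⟩

variable {K : ℕ} (D : Finset (Fin K → ℝ)) (p : (Fin K → ℝ) → ℝ)

instance : IsProbabilityMeasure signLaw :=
  ⟨by simp [signLaw, ENNReal.inv_two_add_inv_two]⟩

instance : IsFiniteMeasure (vecMeas D p) :=
  ⟨by simp [vecMeas, ENNReal.sum_lt_top]⟩

theorem integrable_signLaw (f : ℝ → ℝ) : Integrable f signLaw :=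
  ((integrable_dirac (by simp)).add_measure (integrable_dirac (by simp))).smul_measure (by simp)

theorem integral_signLaw (f : ℝ → ℝ) : ∫ x, f x ∂signLaw = 2⁻¹ * (f (-1) + f 1) := by
  rw [signLaw, integral_smul_measure, integral_add_measure (integrable_dirac (by simp))
    (integrable_dirac (by simp)), integral_dirac, integral_dirac]
  simp

theorem integrable_vecMeas (f : (Fin K → ℝ) → ℝ) : Integrable f (vecMeas D p) :=
  integrable_finsetSum_measure.2 fun _ _ =>
    (integrable_dirac (by simp)).smul_measure ENNReal.ofReal_ne_top

variable {D p}

theorem integral_vecMeas (hp0 : ∀ v ∈ D, 0 ≤ p v) (f : (Fin K → ℝ) → ℝ) :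
    ∫ v, f v ∂vecMeas D p = ∑ v ∈ D, p v * f v := by
  rw [vecMeas, integral_finsetSum_measure fun v _ =>
    (integrable_dirac (by simp)).smul_measure ENNReal.ofReal_ne_top]
  refine sum_congr rfl fun v hv => ?_
  rw [integral_smul_measure, integral_dirac, ENNReal.toReal_ofReal (hp0 v hv), smul_eq_mul]

theorem integral_vecMeas_prod_vecMeas_prod_signLaw (hp0 : ∀ v ∈ D, 0 ≤ p v)
    {G : ((Fin K → ℝ) × (Fin K → ℝ)) × ℝ → ℝ} (hG : Measurable G) :
    ∫ x, G x ∂((vecMeas D p).prod (vecMeas D p)).prod signLaw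
      = ∑ v ∈ D, ∑ w ∈ D, p v * p w * (2⁻¹ * (G ((v, w), -1) + G ((v, w), 1))) := by
  have hpair := integrable_prod_of_forall_integrable (fun f _ => integrable_vecMeas D p f)
    (fun f _ => integrable_vecMeas D p f)
  rw [integral_prod G (integrable_prod_of_forall_integrable hpair
    (fun f _ => integrable_signLaw f) G hG.aestronglyMeasurable)]
  simp_rw [integral_signLaw]
  rw [integral_prod _ (hpair _ (by fun_prop))]
  simp_rw [integral_vecMeas hp0, mul_sum, mul_assoc]

end FiniteLaws

theorem stmt6_general (K : ℕ) (hK : 1 ≤ K)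
    {P : Type*} [Fintype P] [Nonempty P] (A : P → ℝ) (y : P → Fin K)
    (D : Finset (Fin K → ℝ)) (p : (Fin K → ℝ) → ℝ)
    (hp0 : ∀ v ∈ D, 0 ≤ p v) (hp1 : ∑ v ∈ D, p v = 1)
    {Ω : Type*} [MeasurableSpace Ω] (μ : Measure Ω)
    (c c' : Ω → Fin K → ℝ) (δ : Ω → ℝ)
    (hc_meas : Measurable c) (hc'_meas : Measurable c') (hδ_meas : Measurable δ)
    (hlaw : Measure.map (fun ω => ((c ω, c' ω), δ ω)) μ
      = ((vecMeas D p).prod (vecMeas D p)).prod signLaw) :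
    Finset.univ.inf' (Finset.univ_nonempty_iff.mpr (Fin.pos_iff_nonempty.mp hK))
      (fun i => ∫ v, (v i + Finset.univ.sup' Finset.univ_nonempty
          (fun π => A π - v (y π))) ∂(vecMeas D p))
    ≤ ∫ ω, Finset.univ.sup' Finset.univ_nonempty
        (fun π => A π + δ ω * (c' ω (y π) - c ω (y π))) ∂μ := by
  set G : ((Fin K → ℝ) × (Fin K → ℝ)) × ℝ → ℝ := fun x =>
    univ.sup' univ_nonempty fun π => A π + x.2 * (x.1.2 (y π) - x.1.1 (y π))
  set h : (Fin K → ℝ) → (Fin K → ℝ) → ℝ := fun v w =>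
    univ.sup' univ_nonempty fun π => A π - v (y π) + w (y π)
  have hG : Continuous G := by fun_prop
  have hG_sign : ∀ v w, G ((v, w), -1) = h w v ∧ G ((v, w), 1) = h v w := fun v w =>
    ⟨sup'_congr _ rfl fun _ _ => by ring, sup'_congr _ rfl fun _ _ => by ring⟩
  have hrow : ∀ v ∈ D, ∃ i, ∀ w ∈ D,
      univ.sup' univ_nonempty (fun π => A π - v (y π)) + w i ≤ h v w := fun v _ => by
    obtain ⟨π₀, -, hπ₀⟩ := exists_mem_sup'_add_le_sup'_add univ_nonempty fun π => A π - v (y π)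
    exact ⟨y π₀, fun w _ => hπ₀ fun π => w (y π)⟩
  simp_rw [integral_vecMeas hp0]
  calc _ ≤ ∑ v ∈ D, ∑ w ∈ D, p v * p w * h v w := inf'_sum_mul_add_le_sum_sum _ hp0 hp1 hrow
    _ = ∑ v ∈ D, ∑ w ∈ D, p v * p w * (2⁻¹ * (G ((v, w), -1) + G ((v, w), 1))) := by
        simp only [hG_sign, sum_sum_mul_mul_half_add_swap]
    _ = ∫ x, G x ∂((vecMeas D p).prod (vecMeas D p)).prod signLaw :=
        (integral_vecMeas_prod_vecMeas_prod_signLaw hp0 hG.measurable).symm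
    _ = _ := by
        rw [← hlaw, integral_map ((hc_meas.prodMk hc'_meas).prodMk hδ_meas).aemeasurable
          hG.aestronglyMeasurable]

/-- **Symmetrization step.**
Let `K ≥ 1`, `Π` finite nonempty, `A : Π → ℝ`, `y : Π → [K]`, and `p` a probability
distribution on a finite set `D ⊆ ℝ^K`. Let `c, c'` be independent random vectors
with law `p` and `δ` uniform on `{-1,1}`, independent of `(c, c')` (i.e. the joint
law of `((c, c'), δ)` is the product of the marginals). Then
`min_i E_{c∼p}[c(i) + sup_π (A_π - c(y(π)))]
  ≤ E[sup_π (A_π + δ (c'(y(π)) - c(y(π))))]`. -/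
theorem stmt6 (K : ℕ) (hK : 1 ≤ K)
    {P : Type*} [Fintype P] [Nonempty P] (A : P → ℝ) (y : P → Fin K)
    (D : Finset (Fin K → ℝ)) (p : (Fin K → ℝ) → ℝ)
    (hp0 : ∀ v ∈ D, 0 ≤ p v) (hp1 : ∑ v ∈ D, p v = 1)
    {Ω : Type*} [MeasurableSpace Ω] (μ : Measure Ω) [IsProbabilityMeasure μ]
    (c c' : Ω → Fin K → ℝ) (δ : Ω → ℝ)
    (hc_meas : Measurable c) (hc'_meas : Measurable c') (hδ_meas : Measurable δ)
    (hlaw : Measure.map (fun ω => ((c ω, c' ω), δ ω)) μ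
      = ((vecMeas D p).prod (vecMeas D p)).prod signLaw) :
    Finset.univ.inf' (Finset.univ_nonempty_iff.mpr (Fin.pos_iff_nonempty.mp hK))
      (fun i => ∫ v, (v i + Finset.univ.sup' Finset.univ_nonempty
          (fun π => A π - v (y π))) ∂(vecMeas D p))
    ≤ ∫ ω, Finset.univ.sup' Finset.univ_nonempty
        (fun π => A π + δ ω * (c' ω (y π) - c ω (y π))) ∂μ :=
  stmt6_general K hK A y D p hp0 hp1 μ c c' δ hc_meas hc'_meas hδ_meas hlaw
end

section
/- Let K ≥ 1 be an integer and L ≥ K a real number. Let D = {0, L·e_1, …, L·e_K} ⊂ ℝ^K and let p be a probability distribution on D with p(L·e_i) ≤ 1/L for every i ∈ {1,…,K}. Let Π be a finite nonempty set, A : Π → ℝ, and y : Π → {1,…,K}. Let c ∼ p, let δ be uniform on {−1,1} independent of c, let ε be a Rademacher random vector in {−1,1}^K, and let Z be a random variable independent of ε with P(Z = L) = K/L and P(Z = 0) = 1 − K/L. Then E_{c,δ}[ sup_{π∈Π}( A_π + 2·δ·c(y(π)) ) ] ≤ E_{ε,Z}[ sup_{π∈Π}( A_π + 2·ε(y(π))·Z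 ) ]. -/
open MeasureTheory ProbabilityTheory

/-- The finite set `D = {0, L e_1, …, L e_K} ⊆ ℝ^K`. -/
noncomputable def bigD (K : ℕ) (L : ℝ) : Finset (Fin K → ℝ) :=
  insert (0 : Fin K → ℝ) (Finset.univ.image fun i : Fin K => Pi.single i L)

/-- The law of the `{0, L}`-valued random variable `Z` with `P(Z = L) = K/L`
and `P(Z = 0) = 1 - K/L`. -/
noncomputable def zLaw (K : ℕ) (L : ℝ) : Measure ℝ :=
  ENNReal.ofReal ((K : ℝ) / L) • Measure.dirac L
    + ENNReal.ofReal (1 - (K : ℝ) / L) • Measure.dirac 0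

/-! ### Auxiliary lemmas: integrals against finite combinations of Dirac measures -/

section comb
variable {ι κ α β : Type*} [MeasurableSpace α] [MeasurableSpace β]

lemma aux_integrable_dirac {f : α → ℝ} (hf : StronglyMeasurable f) (a : α) :
    Integrable f (Measure.dirac a) := by
  refine ⟨hf.aestronglyMeasurable, ?_⟩
  unfold HasFiniteIntegral
  rw [lintegral_dirac' a]
  · exact ENNReal.coe_lt_top
  · exact hf.measurable.nnnorm.coe_nnreal_ennreal

lemma aux_comb_finite (s : Finset ι) (w : ι → ENNReal) (hw : ∀ j ∈ s, w j ≠ ⊤) (x : ι → α) :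
    IsFiniteMeasure (∑ j ∈ s, w j • Measure.dirac (x j)) := by
  constructor
  rw [Measure.finset_sum_apply]
  refine (ENNReal.sum_lt_top).2 fun j hj => ?_
  simp only [Measure.smul_apply, smul_eq_mul, lt_top_iff_ne_top]
  exact ENNReal.mul_ne_top (hw j hj) (by simp)

lemma aux_integral_comb (s : Finset ι) (w : ι → ENNReal) (hw : ∀ j ∈ s, w j ≠ ⊤) (x : ι → α)
    (f : α → ℝ) (hf : StronglyMeasurable f) :
    ∫ a, f a ∂(∑ j ∈ s, w j • Measure.dirac (x j)) = ∑ j ∈ s, (w j).toReal * f (x j) := by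
  rw [integral_finset_sum_measure]
  · refine Finset.sum_congr rfl fun j hj => ?_
    rw [integral_smul_measure, integral_dirac' f (x j) hf, smul_eq_mul]
  · exact fun j hj => (aux_integrable_dirac hf (x j)).smul_measure (hw j hj)

lemma aux_integral_comb2 (s : Finset ι) (t : Finset κ) (W : ι → κ → ENNReal)
    (hW : ∀ j ∈ s, ∀ k ∈ t, W j k ≠ ⊤) (q : ι → κ → α)
    (f : α → ℝ) (hf : StronglyMeasurable f) :
    ∫ a, f a ∂(∑ j ∈ s, ∑ k ∈ t, W j k • Measure.dirac (q j k))
      = ∑ j ∈ s, ∑ k ∈ t, (W j k).toReal * f (q j k) := by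
  rw [integral_finset_sum_measure]
  · exact Finset.sum_congr rfl fun j hj => aux_integral_comb t (W j) (hW j hj) (q j) f hf
  · intro j hj
    exact integrable_finset_sum_measure.2 fun k hk =>
      (aux_integrable_dirac hf _).smul_measure (hW j hj k hk)

lemma aux_prod_comb [MeasurableSingletonClass α] [MeasurableSingletonClass β]
    (s : Finset ι) (t : Finset κ) (w : ι → ENNReal) (u : κ → ENNReal)
    (hw : ∀ j ∈ s, w j ≠ ⊤) (hu : ∀ k ∈ t, u k ≠ ⊤) (x : ι → α) (z : κ → β) :
    (∑ j ∈ s, w j • Measure.dirac (x j)).prod (∑ k ∈ t, u k • Measure.dirac (z k))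
      = ∑ j ∈ s, ∑ k ∈ t, (w j * u k) • Measure.dirac (x j, z k) := by
  haveI := aux_comb_finite s w hw x
  haveI := aux_comb_finite t u hu z
  refine Measure.prod_eq fun S T hS hT => ?_
  simp only [Measure.finset_sum_apply, Measure.smul_apply, Measure.dirac_apply, smul_eq_mul]
  rw [Finset.sum_mul_sum]
  refine Finset.sum_congr rfl fun j hj => Finset.sum_congr rfl fun k hk => ?_
  by_cases h1 : x j ∈ S <;> by_cases h2 : z k ∈ T <;>
    simp [Set.indicator_apply, h1, h2, Set.mem_prod, mul_comm, mul_assoc, mul_left_comm]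

end comb

/-! ### signLaw, zLaw and the Rademacher product as Dirac combinations -/

/-- sign of a boolean -/
def sgn (b : Bool) : ℝ := if b then 1 else -1

lemma sgn_not (b : Bool) : sgn (!b) = - sgn b := by cases b <;> simp [sgn]

instance inst_s8 : IsProbabilityMeasure signLaw := by
  constructor
  simp [signLaw, ENNReal.inv_mul_cancel, two_mul, ENNReal.inv_two_add_inv_two]

lemma signLaw_comb : signLaw = ∑ b : Bool, (2⁻¹ : ENNReal) • Measure.dirac (sgn b) := by
  simp [signLaw, Fintype.sum_bool, sgn, smul_add]
  abel

lemma zLaw_comb (K : ℕ) (L : ℝ) :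
    zLaw K L = ∑ b : Bool,
      (if b then ENNReal.ofReal ((K : ℝ) / L) else ENNReal.ofReal (1 - (K : ℝ) / L))
        • Measure.dirac (if b then L else (0 : ℝ)) := by
  simp [zLaw, Fintype.sum_bool]

lemma signLaw_apply (s : Set ℝ) :
    signLaw s = ∑ b : Bool, 2⁻¹ * (Set.indicator s (1 : ℝ → ENNReal) (sgn b)) := by
  simp [signLaw, Fintype.sum_bool, sgn, Measure.dirac_apply, mul_add]
  abel

lemma pi_signLaw (K : ℕ) :
    Measure.pi (fun _ : Fin K => signLaw)
      = ∑ b : Fin K → Bool, ((2⁻¹ : ENNReal)) ^ K • Measure.dirac (fun i => sgn (b i)) := by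
  refine Measure.pi_eq fun s hs => ?_
  rw [Measure.finset_sum_apply]
  have key : ∀ b : Fin K → Bool,
      (((2⁻¹ : ENNReal)) ^ K • Measure.dirac (fun i => sgn (b i))) (Set.pi Set.univ s)
        = ∏ i, (2⁻¹ * Set.indicator (s i) (1 : ℝ → ENNReal) (sgn (b i))) := by
    intro b
    rw [Finset.prod_mul_distrib, Finset.prod_const, Finset.card_univ, Fintype.card_fin,
      Measure.smul_apply, smul_eq_mul]
    congr 1
    rw [Measure.dirac_apply]
    by_cases h : (fun i => sgn (b i)) ∈ Set.pi Set.univ s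
    · rw [Set.indicator_of_mem h]
      rw [Set.mem_univ_pi] at h
      simp [Set.indicator_of_mem (h _)]
    · rw [Set.indicator_of_notMem h]
      rw [Set.mem_univ_pi] at h
      push_neg at h
      obtain ⟨i, hi⟩ := h
      exact (Finset.prod_eq_zero (Finset.mem_univ i) (by simp [Set.indicator_of_notMem hi])).symm
  simp_rw [key]
  have h2 : ∏ i, signLaw (s i)
      = ∑ x ∈ Fintype.piFinset (fun _ : Fin K => (Finset.univ : Finset Bool)),
          ∏ i, 2⁻¹ * (s i).indicator (1 : ℝ → ENNReal) (sgn (x i)) := by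
    refine Eq.trans (Finset.prod_congr rfl fun i _ => signLaw_apply (s i)) ?_
    exact Finset.prod_univ_sum (fun _ => (Finset.univ : Finset Bool))
      (fun i c => 2⁻¹ * (s i).indicator (1 : ℝ → ENNReal) (sgn c))
  rw [h2, Fintype.piFinset_univ]

/-! ### The combinatorial core -/

section comb2
variable {K : ℕ} {P : Type*} [Fintype P] [Nonempty P] (A : P → ℝ) (y : P → Fin K) (L : ℝ)

lemma card_filter_eq (hK : 1 ≤ K) (i : Fin K) (σ : Bool) :
    (Finset.univ.filter (fun b : Fin K → Bool => b i = σ)).card = 2 ^ (K - 1) := by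
  have hbij : (Finset.univ.filter (fun b : Fin K → Bool => b i = σ)).card
      = (Finset.univ.filter (fun b : Fin K → Bool => ¬ b i = σ)).card := by
    refine Finset.card_bij' (fun b _ => Function.update b i (!b i))
      (fun b _ => Function.update b i (!b i)) ?_ ?_ ?_ ?_
    · intro b hb
      simp only [Finset.mem_filter, Finset.mem_univ, true_and] at hb ⊢
      simp [Function.update_self, hb]
    · intro b hb
      simp only [Finset.mem_filter, Finset.mem_univ, true_and] at hb ⊢
      simp only [Function.update_self]
      cases h : b i <;> simp_all
    · intro b _
      funext l
      by_cases hl : l = i <;> simp [Function.update_apply, hl]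
    · intro b _
      funext l
      by_cases hl : l = i <;> simp [Function.update_apply, hl]
  have hsum := Finset.card_filter_add_card_filter_not
    (s := (Finset.univ : Finset (Fin K → Bool))) (p := fun b => b i = σ)
  have hcard : (Finset.univ : Finset (Fin K → Bool)).card = 2 * 2 ^ (K - 1) := by
    rw [Finset.card_univ]
    have h1 : Fintype.card (Fin K → Bool) = 2 ^ K := by simp
    rw [h1]
    conv_lhs => rw [show K = (K - 1) + 1 from (Nat.succ_pred_eq_of_pos hK).symm]
    ring
  rw [← hbij, hcard, ← two_mul] at hsum
  exact Nat.eq_of_mul_eq_mul_left (by norm_num) hsum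

lemma key_filter (hK : 1 ≤ K) (i : Fin K) (σ : Bool) :
    (2 : ℝ) ^ (K - 1) * Finset.univ.sup' Finset.univ_nonempty
        (fun π => A π + 2 * sgn σ * (Pi.single i L : Fin K → ℝ) (y π))
      ≤ ∑ b ∈ Finset.univ.filter (fun b : Fin K → Bool => b i = σ),
          Finset.univ.sup' Finset.univ_nonempty (fun π => A π + 2 * sgn (b (y π)) * L) := by
  set F : (Fin K → Bool) → ℝ := fun b =>
    Finset.univ.sup' Finset.univ_nonempty (fun π => A π + 2 * sgn (b (y π)) * L) with hF
  obtain ⟨π₀, -, hπ₀⟩ := Finset.exists_mem_eq_sup' (Finset.univ_nonempty (α := P))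
    (fun π => A π + 2 * sgn σ * (Pi.single i L : Fin K → ℝ) (y π))
  rw [hπ₀]
  set T := Finset.univ.filter (fun b : Fin K → Bool => b i = σ) with hT
  have hcard : (T.card : ℝ) = 2 ^ (K - 1) := by
    rw [hT, card_filter_eq hK i σ]; push_cast; ring
  by_cases hyi : y π₀ = i
  · have hval : (Pi.single i L : Fin K → ℝ) (y π₀) = L := by
      rw [hyi, Pi.single_eq_same]
    rw [hval]
    have hle : ∀ b ∈ T, A π₀ + 2 * sgn σ * L ≤ F b := by
      intro b hb
      rw [hT, Finset.mem_filter] at hb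
      have hb2 : b (y π₀) = σ := by rw [hyi]; exact hb.2
      have h := Finset.le_sup' (fun π => A π + 2 * sgn (b (y π)) * L) (Finset.mem_univ π₀)
      rw [hb2] at h
      exact h
    have hs := Finset.card_nsmul_le_sum T F (A π₀ + 2 * sgn σ * L) hle
    rw [nsmul_eq_mul, hcard] at hs
    exact hs
  · have hval : (Pi.single i L : Fin K → ℝ) (y π₀) = 0 := by
      rw [Pi.single_apply, if_neg hyi]
    rw [hval, mul_zero, add_zero]
    have hji : y π₀ ≠ i := hyi
    have hflip : ∑ b ∈ T, F b = ∑ b ∈ T, F (Function.update b (y π₀) (!b (y π₀))) := by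
      refine Finset.sum_nbij' (fun b => Function.update b (y π₀) (!b (y π₀)))
        (fun b => Function.update b (y π₀) (!b (y π₀))) ?_ ?_ ?_ ?_ ?_
      · intro b hb
        rw [hT, Finset.mem_filter] at hb ⊢
        refine ⟨Finset.mem_univ _, ?_⟩
        show Function.update b (y π₀) (!b (y π₀)) i = σ
        rw [Function.update_apply, if_neg (fun h => hji h.symm)]
        exact hb.2
      · intro b hb
        rw [hT, Finset.mem_filter] at hb ⊢
        refine ⟨Finset.mem_univ _, ?_⟩
        show Function.update b (y π₀) (!b (y π₀)) i = σ
        rw [Function.update_apply, if_neg (fun h => hji h.symm)]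
        exact hb.2
      · intro b _
        funext l
        by_cases hl : l = y π₀ <;> simp [Function.update_apply, hl]
      · intro b _
        funext l
        by_cases hl : l = y π₀ <;> simp [Function.update_apply, hl]
      · intro b _
        show F _ = F _
        congr 1
        funext l
        by_cases hl : l = y π₀ <;> simp [Function.update_apply, hl]
    have hpair : ∀ b ∈ T, 2 * A π₀ ≤ F b + F (Function.update b (y π₀) (!b (y π₀))) := by
      intro b _
      have h1 : A π₀ + 2 * sgn (b (y π₀)) * L ≤ F b :=
        Finset.le_sup' (fun π => A π + 2 * sgn (b (y π)) * L) (Finset.mem_univ π₀)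
      have h2 : A π₀ + 2 * sgn ((Function.update b (y π₀) (!b (y π₀))) (y π₀)) * L
          ≤ F (Function.update b (y π₀) (!b (y π₀))) :=
        Finset.le_sup'
          (fun π => A π + 2 * sgn ((Function.update b (y π₀) (!b (y π₀))) (y π)) * L)
          (Finset.mem_univ π₀)
      rw [Function.update_self, sgn_not] at h2
      linarith
    have hs := Finset.card_nsmul_le_sum T
      (fun b => F b + F (Function.update b (y π₀) (!b (y π₀)))) (2 * A π₀) hpair
    rw [nsmul_eq_mul, hcard] at hs
    rw [Finset.sum_add_distrib, ← hflip] at hs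
    linarith
end comb2

/-- **Replacing the symmetrized estimated cost by random signs scaled by `Z`.**
Let `K ≥ 1`, `L ≥ K`, `D = {0, L e_1, …, L e_K}` and `p` a probability distribution
on `D` with `p(L e_i) ≤ 1/L` for all `i`. Let `c ∼ p` and `δ` uniform on `{-1,1}`
independent of `c`; let `ε` be a Rademacher random vector in `{-1,1}^K` and `Z`
independent of `ε` with `P(Z = L) = K/L`, `P(Z = 0) = 1 - K/L` (independence and
the marginals being encoded by the product-form joint laws). Then
`E_{c,δ}[sup_π (A_π + 2 δ c(y(π)))] ≤ E_{ε,Z}[sup_π (A_π + 2 ε(y(π)) Z)]`. -/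
theorem stmt8 (K : ℕ) (hK : 1 ≤ K) (L : ℝ) (hL : (K : ℝ) ≤ L)
    {P : Type*} [Fintype P] [Nonempty P] (A : P → ℝ) (y : P → Fin K)
    (p : (Fin K → ℝ) → ℝ)
    (hp0 : ∀ v ∈ bigD K L, 0 ≤ p v) (hp1 : ∑ v ∈ bigD K L, p v = 1)
    (hpcap : ∀ i : Fin K, p (Pi.single i L) ≤ 1 / L)
    {Ω₁ : Type*} [MeasurableSpace Ω₁] (μ₁ : Measure Ω₁) [IsProbabilityMeasure μ₁]
    (c : Ω₁ → Fin K → ℝ) (δ : Ω₁ → ℝ)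
    (hc_meas : Measurable c) (hδ_meas : Measurable δ)
    (hlaw₁ : Measure.map (fun ω => (c ω, δ ω)) μ₁
      = (vecMeas (bigD K L) p).prod signLaw)
    {Ω₂ : Type*} [MeasurableSpace Ω₂] (μ₂ : Measure Ω₂) [IsProbabilityMeasure μ₂]
    (eps : Ω₂ → Fin K → ℝ) (Z : Ω₂ → ℝ)
    (heps_meas : Measurable eps) (hZ_meas : Measurable Z)
    (hlaw₂ : Measure.map (fun ω => (eps ω, Z ω)) μ₂
      = (Measure.pi fun _ : Fin K => signLaw).prod (zLaw K L)) :
    ∫ ω, Finset.univ.sup' Finset.univ_nonempty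
        (fun π => A π + 2 * δ ω * c ω (y π)) ∂μ₁
    ≤ ∫ ω, Finset.univ.sup' Finset.univ_nonempty
        (fun π => A π + 2 * eps ω (y π) * Z ω) ∂μ₂ := by
  classical
  -- basic positivity facts
  have hK1 : (1 : ℝ) ≤ (K : ℝ) := by exact_mod_cast hK
  have hLpos : (0 : ℝ) < L := lt_of_lt_of_le (by linarith) hL
  have hKL : (K : ℝ) / L ≤ 1 := (div_le_one hLpos).2 hL
  have hKL0 : (0 : ℝ) ≤ (K : ℝ) / L := by positivity
  -- abbreviations
  set M : ℝ := Finset.univ.sup' Finset.univ_nonempty A with hM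
  set h : Fin K → ℝ → ℝ := fun i t => Finset.univ.sup' Finset.univ_nonempty
    (fun π => A π + 2 * t * (Pi.single i L : Fin K → ℝ) (y π)) with hh
  set F : (Fin K → Bool) → ℝ := fun b => Finset.univ.sup' Finset.univ_nonempty
    (fun π => A π + 2 * sgn (b (y π)) * L) with hFdef
  set SF : ℝ := ∑ b : Fin K → Bool, F b with hSF
  have hsgnt : sgn true = 1 := by simp [sgn]
  have hsgnf : sgn false = -1 := by simp [sgn]
  -- the two integrand functions, as functions on the product space
  set f : (Fin K → ℝ) × ℝ → ℝ := fun q => Finset.univ.sup' Finset.univ_nonempty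
    (fun π => A π + 2 * q.2 * q.1 (y π)) with hfdef
  set g : (Fin K → ℝ) × ℝ → ℝ := fun q => Finset.univ.sup' Finset.univ_nonempty
    (fun π => A π + 2 * q.1 (y π) * q.2) with hgdef
  have hfc : Continuous f := by
    refine Continuous.finset_sup'_apply Finset.univ_nonempty fun π _ => ?_
    exact continuous_const.add ((continuous_const.mul continuous_snd).mul
      ((continuous_apply (y π)).comp continuous_fst))
  have hgc : Continuous g := by
    refine Continuous.finset_sup'_apply Finset.univ_nonempty fun π _ => ?_
    exact continuous_const.add ((continuous_const.mul
      ((continuous_apply (y π)).comp continuous_fst)).mul continuous_snd)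
  -- membership facts about bigD
  have hLne : L ≠ 0 := ne_of_gt hLpos
  have h0nm : (0 : Fin K → ℝ) ∉ Finset.univ.image (fun i : Fin K => (Pi.single i L : Fin K → ℝ)) := by
    intro hmem
    obtain ⟨i, -, hi⟩ := Finset.mem_image.1 hmem
    have := congrFun hi i
    rw [Pi.single_eq_same] at this
    exact hLne (by simpa using this)
  have hinj : ∀ i ∈ (Finset.univ : Finset (Fin K)), ∀ j ∈ (Finset.univ : Finset (Fin K)),
      (Pi.single i L : Fin K → ℝ) = Pi.single j L → i = j := by
    intro i _ j _ hij
    by_contra hne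
    have := congrFun hij i
    rw [Pi.single_eq_same, Pi.single_apply, if_neg hne] at this
    exact hLne this
  have h0mem : (0 : Fin K → ℝ) ∈ bigD K L := Finset.mem_insert_self _ _
  have hemem : ∀ i : Fin K, (Pi.single i L : Fin K → ℝ) ∈ bigD K L := fun i =>
    Finset.mem_insert_of_mem (Finset.mem_image_of_mem _ (Finset.mem_univ i))
  -- Left-hand side computation
  have eqL : ∫ ω, Finset.univ.sup' Finset.univ_nonempty
        (fun π => A π + 2 * δ ω * c ω (y π)) ∂μ₁
      = p 0 * M + ∑ i : Fin K, p (Pi.single i L) * ((h i 1 + h i (-1)) / 2) := by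
    have hmeq : (vecMeas (bigD K L) p).prod signLaw
        = ∑ v ∈ bigD K L, ∑ b ∈ (Finset.univ : Finset Bool),
            (ENNReal.ofReal (p v) * 2⁻¹) • Measure.dirac (v, sgn b) := by
      rw [vecMeas, signLaw_comb]
      exact aux_prod_comb _ _ _ _ (fun v _ => ENNReal.ofReal_ne_top) (fun b _ => by simp) _ _
    calc ∫ ω, Finset.univ.sup' Finset.univ_nonempty
            (fun π => A π + 2 * δ ω * c ω (y π)) ∂μ₁
        = ∫ q, f q ∂(Measure.map (fun ω => (c ω, δ ω)) μ₁) :=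
          (integral_map (hc_meas.prodMk hδ_meas).aemeasurable
            hfc.stronglyMeasurable.aestronglyMeasurable).symm
      _ = ∫ q, f q ∂((vecMeas (bigD K L) p).prod signLaw) := by rw [hlaw₁]
      _ = ∑ v ∈ bigD K L, ∑ b ∈ (Finset.univ : Finset Bool),
            (ENNReal.ofReal (p v) * 2⁻¹).toReal * f (v, sgn b) := by
          rw [hmeq]
          exact aux_integral_comb2 _ _ _
            (fun v _ b _ => ENNReal.mul_ne_top ENNReal.ofReal_ne_top (by simp)) _ _
            hfc.stronglyMeasurable
      _ = ∑ v ∈ bigD K L, ∑ b ∈ (Finset.univ : Finset Bool),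
            (p v * 2⁻¹) * f (v, sgn b) := by
          refine Finset.sum_congr rfl fun v hv => Finset.sum_congr rfl fun b _ => ?_
          rw [ENNReal.toReal_mul, ENNReal.toReal_ofReal (hp0 v hv)]
          norm_num
      _ = p 0 * M + ∑ i : Fin K, p (Pi.single i L) * ((h i 1 + h i (-1)) / 2) := by
          rw [bigD, Finset.sum_insert h0nm, Finset.sum_image hinj]
          have hf0 : ∀ b : Bool, f (0, sgn b) = M := by
            intro b
            rw [hfdef, hM]
            refine Finset.sup'_congr _ rfl fun π _ => ?_
            simp
          have hfi : ∀ (i : Fin K) (b : Bool),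
              f ((Pi.single i L : Fin K → ℝ), sgn b) = h i (sgn b) := fun i b => rfl
          rw [Fintype.sum_bool, hf0, hf0]
          have : ∀ i : Fin K, ∑ b ∈ (Finset.univ : Finset Bool),
              (p (Pi.single i L) * 2⁻¹) * f ((Pi.single i L : Fin K → ℝ), sgn b)
                = p (Pi.single i L) * ((h i 1 + h i (-1)) / 2) := by
            intro i
            rw [Fintype.sum_bool, hfi, hfi, hsgnt, hsgnf]
            ring
          rw [Finset.sum_congr rfl fun i _ => this i]
          ring
  -- Right-hand side computation
  have eqR : ∫ ω, Finset.univ.sup' Finset.univ_nonempty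
        (fun π => A π + 2 * eps ω (y π) * Z ω) ∂μ₂
      = ((K : ℝ) / L) * (((2 : ℝ)⁻¹) ^ K * SF) + (1 - (K : ℝ) / L) * M := by
    have hmeq : (Measure.pi fun _ : Fin K => signLaw).prod (zLaw K L)
        = ∑ b ∈ (Finset.univ : Finset (Fin K → Bool)), ∑ b' ∈ (Finset.univ : Finset Bool),
            (((2⁻¹ : ENNReal)) ^ K *
              (if b' then ENNReal.ofReal ((K : ℝ) / L) else ENNReal.ofReal (1 - (K : ℝ) / L)))
            • Measure.dirac ((fun i => sgn (b i)), if b' then L else (0 : ℝ)) := by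
      rw [pi_signLaw, zLaw_comb]
      exact aux_prod_comb _ _ _ _ (fun b _ => by simp)
        (fun b' _ => by cases b' <;> simp) _ _
    calc ∫ ω, Finset.univ.sup' Finset.univ_nonempty
            (fun π => A π + 2 * eps ω (y π) * Z ω) ∂μ₂
        = ∫ q, g q ∂(Measure.map (fun ω => (eps ω, Z ω)) μ₂) :=
          (integral_map (heps_meas.prodMk hZ_meas).aemeasurable
            hgc.stronglyMeasurable.aestronglyMeasurable).symm
      _ = ∑ b ∈ (Finset.univ : Finset (Fin K → Bool)), ∑ b' ∈ (Finset.univ : Finset Bool),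
            (((2⁻¹ : ENNReal)) ^ K *
              (if b' then ENNReal.ofReal ((K : ℝ) / L) else ENNReal.ofReal (1 - (K : ℝ) / L))).toReal
              * g ((fun i => sgn (b i)), if b' then L else (0 : ℝ)) := by
          rw [hlaw₂, hmeq]
          exact aux_integral_comb2 _ _ _
            (fun b _ b' _ => ENNReal.mul_ne_top (by simp)
              (by cases b' <;> simp)) _ _ hgc.stronglyMeasurable
      _ = ∑ b : Fin K → Bool,
            (((2 : ℝ)⁻¹) ^ K * ((K : ℝ) / L) * F b
              + ((2 : ℝ)⁻¹) ^ K * (1 - (K : ℝ) / L) * M) := by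
          refine Finset.sum_congr rfl fun b _ => ?_
          rw [Fintype.sum_bool]
          have hgL : g ((fun i => sgn (b i)), L) = F b := rfl
          have hg0 : g ((fun i => sgn (b i)), (0 : ℝ)) = M := by
            rw [hgdef, hM]
            refine Finset.sup'_congr _ rfl fun π _ => ?_
            simp
          have e1 : (((2⁻¹ : ENNReal)) ^ K * ENNReal.ofReal ((K : ℝ) / L)).toReal
              = ((2 : ℝ)⁻¹) ^ K * ((K : ℝ) / L) := by
            rw [ENNReal.toReal_mul, ENNReal.toReal_ofReal hKL0, ENNReal.toReal_pow]
            norm_num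
          have e2 : (((2⁻¹ : ENNReal)) ^ K * ENNReal.ofReal (1 - (K : ℝ) / L)).toReal
              = ((2 : ℝ)⁻¹) ^ K * (1 - (K : ℝ) / L) := by
            rw [ENNReal.toReal_mul, ENNReal.toReal_ofReal (by linarith), ENNReal.toReal_pow]
            norm_num
          simp only [show ((false : Bool) = true) = False from by simp, if_false,
            eq_self_iff_true, if_true]
          rw [e1, e2, hgL, hg0]
      _ = ((K : ℝ) / L) * (((2 : ℝ)⁻¹) ^ K * SF) + (1 - (K : ℝ) / L) * M := by
          rw [Finset.sum_add_distrib, ← Finset.mul_sum, Finset.sum_const, Finset.card_univ]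
          have hcard : Fintype.card (Fin K → Bool) = 2 ^ K := by simp
          rw [hcard, nsmul_eq_mul, hSF]
          have hp : ((2 : ℝ)) ^ K * ((2 : ℝ)⁻¹) ^ K = 1 := by
            rw [← mul_pow]; norm_num
          push_cast
          linear_combination ((1 - (K : ℝ) / L) * M) * hp
  rw [eqL, eqR]
  -- the key inequalities
  have hpowinv : ((2 : ℝ)⁻¹) ^ K * (2 : ℝ) ^ K = 1 := by
    rw [← mul_pow]; norm_num
  have hpowK : (2 : ℝ) ^ K = 2 * 2 ^ (K - 1) := by
    conv_lhs => rw [show K = (K - 1) + 1 from (Nat.succ_pred_eq_of_pos hK).symm]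
    ring
  have hkey : ∀ i : Fin K, (2 : ℝ) ^ (K - 1) * (h i 1 + h i (-1)) ≤ SF := by
    intro i
    have h1 := key_filter A y L hK i true
    have h2 := key_filter A y L hK i false
    rw [hsgnt] at h1
    rw [hsgnf] at h2
    have hsplit := Finset.sum_filter_add_sum_filter_not
      (Finset.univ : Finset (Fin K → Bool)) (fun b => b i = true) F
    have hfneg : (Finset.univ.filter (fun b : Fin K → Bool => ¬ b i = true))
        = Finset.univ.filter (fun b : Fin K → Bool => b i = false) := by
      refine Finset.filter_congr fun b _ => ?_
      simp
    rw [hfneg] at hsplit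
    rw [hSF, ← hsplit]
    have e1 : h i 1 = Finset.univ.sup' Finset.univ_nonempty
        (fun π => A π + 2 * (1 : ℝ) * (Pi.single i L : Fin K → ℝ) (y π)) := rfl
    have e2 : h i (-1) = Finset.univ.sup' Finset.univ_nonempty
        (fun π => A π + 2 * (-1 : ℝ) * (Pi.single i L : Fin K → ℝ) (y π)) := rfl
    rw [e1, e2, mul_add]
    exact add_le_add h1 h2
  have hMh : ∀ i : Fin K, 2 * M ≤ h i 1 + h i (-1) := by
    intro i
    obtain ⟨π₀, -, hπ₀⟩ := Finset.exists_mem_eq_sup' (Finset.univ_nonempty (α := P)) A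
    have h1 : A π₀ + 2 * (1 : ℝ) * (Pi.single i L : Fin K → ℝ) (y π₀) ≤ h i 1 :=
      Finset.le_sup' (fun π => A π + 2 * (1 : ℝ) * (Pi.single i L : Fin K → ℝ) (y π))
        (Finset.mem_univ π₀)
    have h2 : A π₀ + 2 * (-1 : ℝ) * (Pi.single i L : Fin K → ℝ) (y π₀) ≤ h i (-1) :=
      Finset.le_sup' (fun π => A π + 2 * (-1 : ℝ) * (Pi.single i L : Fin K → ℝ) (y π))
        (Finset.mem_univ π₀)
    rw [hM, hπ₀]
    linarith
  set EF : ℝ := ((2 : ℝ)⁻¹) ^ K * SF with hEF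
  have hEFi : ∀ i : Fin K, (h i 1 + h i (-1)) / 2 ≤ EF := by
    intro i
    have := hkey i
    have h2 : ((2 : ℝ)⁻¹) ^ K * ((2 : ℝ) ^ (K - 1) * (h i 1 + h i (-1))) ≤ EF := by
      rw [hEF]
      exact mul_le_mul_of_nonneg_left this (by positivity)
    calc (h i 1 + h i (-1)) / 2
        = ((2 : ℝ)⁻¹) ^ K * ((2 : ℝ) ^ (K - 1) * (h i 1 + h i (-1))) := by
          rw [← mul_assoc]
          have : ((2 : ℝ)⁻¹) ^ K * (2 : ℝ) ^ (K - 1) = 2⁻¹ := by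
            have hx : ((2 : ℝ)⁻¹) ^ K * (2 : ℝ) ^ K = 1 := hpowinv
            rw [hpowK] at hx
            ring_nf at hx ⊢
            linarith
          rw [this]
          ring
      _ ≤ EF := h2
  have hMEF : M ≤ EF := by
    have h1 := hMh ⟨0, hK⟩
    have h2 := hEFi ⟨0, hK⟩
    linarith
  -- remaining facts about p
  have hT1 : p 0 + ∑ i : Fin K, p (Pi.single i L) = 1 := by
    rw [← hp1, bigD, Finset.sum_insert h0nm, Finset.sum_image hinj]
  have hTle : ∑ i : Fin K, p (Pi.single i L) ≤ (K : ℝ) / L := by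
    calc ∑ i : Fin K, p (Pi.single i L) ≤ ∑ _i : Fin K, 1 / L :=
          Finset.sum_le_sum fun i _ => hpcap i
      _ = (K : ℝ) / L := by
          rw [Finset.sum_const, Finset.card_univ, Fintype.card_fin, nsmul_eq_mul]
          ring
  have hp0' : 0 ≤ p 0 := hp0 _ h0mem
  have hpi' : ∀ i : Fin K, 0 ≤ p (Pi.single i L) := fun i => hp0 _ (hemem i)
  -- final assembly
  have step1 : ∑ i : Fin K, p (Pi.single i L) * ((h i 1 + h i (-1)) / 2)
      ≤ (∑ i : Fin K, p (Pi.single i L)) * EF := by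
    rw [Finset.sum_mul]
    exact Finset.sum_le_sum fun i _ => mul_le_mul_of_nonneg_left (hEFi i) (hpi' i)
  set T : ℝ := ∑ i : Fin K, p (Pi.single i L) with hTdef
  have step2 : p 0 * M + T * EF ≤ ((K : ℝ) / L) * EF + (1 - (K : ℝ) / L) * M := by
    have hfact : 0 ≤ ((K : ℝ) / L - T) * (EF - M) :=
      mul_nonneg (by linarith) (by linarith)
    have hexp : ((K : ℝ) / L - T) * (EF - M)
        = ((K : ℝ) / L) * EF - ((K : ℝ) / L) * M - T * EF + T * M := by ring
    rw [hexp] at hfact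
    rw [show p 0 = 1 - T from by linarith]
    linarith
  linarith
end

section
/- Let K ≥ 1 be an integer and L ≥ K a real number, and let z_0, z_1, …, z_K ∈ ℝ. Then sup over all probability vectors (p(0), p(1), …, p(K)) with p(j) ≥ 0, Σ_{j=0}^K p(j) = 1, and p(i) ≤ 1/L for every i ∈ {1,…,K}, of Σ_{j=0}^K p(j)·z_j, equals z_0 + (1/L)·Σ_{i=1}^K (z_i − z_0)^+ , and the supremum is attained. -/
/-- **Value of a linear functional over capped probability vectors.**
Let `K ≥ 1`, `L ≥ K`, and `z_0, z_1, …, z_K ∈ ℝ`. The supremum, over probability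
vectors `(p(0), …, p(K))` with `p(i) ≤ 1/L` for `i ∈ {1,…,K}`, of `Σ_j p(j) z_j`
equals `z_0 + (1/L) Σ_i (z_i - z0)⁺`, and it is attained. -/
theorem stmt10 (K : ℕ) (hK : 1 ≤ K) (L : ℝ) (hL : (K : ℝ) ≤ L)
    (z0 : ℝ) (z : Fin K → ℝ) :
    IsGreatest
      {r : ℝ | ∃ p0 : ℝ, ∃ p : Fin K → ℝ,
        0 ≤ p0 ∧ (∀ i, 0 ≤ p i) ∧ p0 + ∑ i, p i = 1 ∧ (∀ i, p i ≤ 1 / L) ∧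
        r = p0 * z0 + ∑ i, p i * z i}
      (z0 + (1 / L) * ∑ i, max (z i - z0) 0) := by
  have hKpos : (0:ℝ) < K := by exact_mod_cast hK
  have hL0 : (0:ℝ) < L := lt_of_lt_of_le hKpos hL
  constructor
  · -- membership
    set p : Fin K → ℝ := fun i => if z0 < z i then 1 / L else 0 with hp_def
    have hpnn : ∀ i, 0 ≤ p i := by
      intro i; simp only [hp_def]; split <;> positivity
    have hpcap : ∀ i, p i ≤ 1 / L := by
      intro i; simp only [hp_def]; split
      · exact le_rfl
      · positivity
    have hsumle : ∑ i, p i ≤ 1 := by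
      calc ∑ i, p i ≤ ∑ _i : Fin K, (1/L : ℝ) :=
            Finset.sum_le_sum (fun i _ => hpcap i)
        _ = K * (1/L) := by simp [Finset.sum_const, mul_comm]
        _ ≤ 1 := by rw [mul_one_div]; exact (div_le_one hL0).mpr hL
    refine ⟨1 - ∑ i, p i, p, by linarith, hpnn, by ring, hpcap, ?_⟩
    have key : ∀ i : Fin K, (1/L) * max (z i - z0) 0 = p i * z i - p i * z0 := by
      intro i
      simp only [hp_def]
      by_cases h : z0 < z i
      · rw [if_pos h, max_eq_left (by linarith)]; ring
      · rw [if_neg h, max_eq_right (by push_neg at h; linarith)]; ring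
    rw [Finset.mul_sum]
    rw [Finset.sum_congr rfl (fun i _ => key i), Finset.sum_sub_distrib,
      ← Finset.sum_mul]
    ring
  · -- upper bound
    rintro r ⟨p0, p, hp0, hp, hsum, hcap, rfl⟩
    have hrw : p0 * z0 + ∑ i, p i * z i = z0 + ∑ i, p i * (z i - z0) := by
      have hp0' : p0 = 1 - ∑ i, p i := by linarith
      subst hp0'
      simp only [mul_sub, Finset.sum_sub_distrib, ← Finset.sum_mul]
      ring
    rw [hrw, Finset.mul_sum]
    have : ∀ i ∈ Finset.univ, p i * (z i - z0) ≤ (1/L) * max (z i - z0) 0 := by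
      intro i _
      by_cases h : 0 ≤ z i - z0
      · rw [max_eq_left h]
        exact mul_le_mul_of_nonneg_right (hcap i) h
      · rw [max_eq_right (le_of_not_ge h)]
        push_neg at h
        nlinarith [hp i]
    linarith [Finset.sum_le_sum this]
end

section
/- Let K ≥ 1 be an integer and φ ∈ ℝ^K. Then inf_{q∈Δ_K} Σ_{i=1}^K ( q(i) − φ_i )^+ = Σ_{i=1}^K (−φ_i)^+ + ( 1 − Σ_{i=1}^K (φ_i)^+ )^+, and the infimum is attained by some q ∈ Δ_K. -/
/-! The bound comes from the two pointwise inequalities `(q - φ)⁺ ≥ (-φ)⁺` (for `q ≥ 0`) and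
`(q - φ)⁺ ≥ q - φ = (-φ)⁺ + q - φ⁺`, summed against `∑ q = 1`. Each is an equality on the
relevant range of `q`: the first for `q ≤ φ⁺`, the second for `q ≥ φ⁺`. So, with `S = ∑ φ⁺`, the
bound is attained by `q = φ⁺ / S` when `S ≥ 1`, and by spreading the missing mass `1 - S`
uniformly on top of `φ⁺` when `S ≤ 1`. -/

open Finset

lemma max_neg_zero_le_max_sub_zero {q : ℝ} (φ : ℝ) (hq : 0 ≤ q) :
    max (-φ) 0 ≤ max (q - φ) 0 :=
  max_le_max (by linarith) le_rfl

lemma max_neg_zero_add_sub_max_zero_le (q φ : ℝ) :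
    max (-φ) 0 + q - max φ 0 ≤ max (q - φ) 0 := by
  linarith [max_zero_sub_max_neg_zero_eq_self φ, le_max_left (q - φ) 0]

lemma max_sub_zero_eq_of_le_max_zero {q φ : ℝ} (hq : 0 ≤ q) (h : q ≤ max φ 0) :
    max (q - φ) 0 = max (-φ) 0 := by
  rcases le_total φ 0 with hφ | hφ
  · rw [max_eq_right hφ] at h
    rw [le_antisymm h hq, zero_sub]
  · rw [max_eq_left hφ] at h
    rw [max_eq_right (by linarith), max_eq_right (by linarith)]

lemma max_sub_zero_eq_of_max_zero_le {q φ : ℝ} (h : max φ 0 ≤ q) :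
    max (q - φ) 0 = max (-φ) 0 + q - max φ 0 := by
  rw [max_eq_left (by linarith [le_max_left φ 0])]
  linarith [max_zero_sub_max_neg_zero_eq_self φ]

section Simplex

variable {ι : Type*} [Fintype ι] (φ : ι → ℝ)

lemma sum_max_neg_zero_add_max_le_sum {q : ι → ℝ} (hq0 : ∀ i, 0 ≤ q i) (hq1 : ∑ i, q i = 1) :
    (∑ i, max (-φ i) 0) + max (1 - ∑ i, max (φ i) 0) 0 ≤ ∑ i, max (q i - φ i) 0 := by
  rw [add_max, add_zero]
  refine max_le ?_ (sum_le_sum fun i _ => max_neg_zero_le_max_sub_zero (φ i) (hq0 i))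
  calc (∑ i, max (-φ i) 0) + (1 - ∑ i, max (φ i) 0)
      = ∑ i, (max (-φ i) 0 + q i - max (φ i) 0) := by
        simp only [sum_sub_distrib, sum_add_distrib, hq1]; ring
    _ ≤ ∑ i, max (q i - φ i) 0 :=
        sum_le_sum fun i _ => max_neg_zero_add_sub_max_zero_le (q i) (φ i)

lemma exists_sum_eq_one_sum_max_sub_zero_eq [Nonempty ι] :
    ∃ q : ι → ℝ, (∀ i, 0 ≤ q i) ∧ ∑ i, q i = 1 ∧
      ∑ i, max (q i - φ i) 0 = (∑ i, max (-φ i) 0) + max (1 - ∑ i, max (φ i) 0) 0 := by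
  set S := ∑ i, max (φ i) 0 with hS
  rcases le_total S 1 with hS1 | hS1
  · set c := (1 - S) / Fintype.card ι
    have hc : 0 ≤ c := div_nonneg (by linarith) (Nat.cast_nonneg _)
    have hsum : ∑ i, (max (φ i) 0 + c) = 1 := by
      rw [sum_add_distrib, sum_const, card_univ, nsmul_eq_mul,
        mul_div_cancel₀ _ (Nat.cast_ne_zero.mpr Fintype.card_ne_zero)]
      ring
    refine ⟨fun i => max (φ i) 0 + c, fun i => by positivity, hsum, ?_⟩
    rw [sum_congr rfl fun i _ => max_sub_zero_eq_of_max_zero_le (le_add_of_nonneg_right hc),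
      sum_sub_distrib, sum_add_distrib, hsum, max_eq_left (by linarith)]
    ring
  · have hS0 : 0 < S := one_pos.trans_le hS1
    refine ⟨fun i => max (φ i) 0 / S, fun i => by positivity,
      by rw [← sum_div, div_self hS0.ne'], ?_⟩
    rw [sum_congr rfl fun i _ => max_sub_zero_eq_of_le_max_zero (by positivity)
        (div_le_self (le_max_right _ _) hS1),
      max_eq_right (by linarith), add_zero]

end Simplex

/-- **Value of the water-filling piecewise-linear program.**
Let `K ≥ 1` and `φ ∈ ℝ^K`. Then
`inf_{q ∈ Δ_K} Σ_i (q(i) - φ_i)⁺ = Σ_i (-φ_i)⁺ + (1 - Σ_i (φ_i)⁺)⁺`,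
and the infimum is attained by some `q ∈ Δ_K`. -/
theorem stmt11 (K : ℕ) (hK : 1 ≤ K) (φ : Fin K → ℝ) :
    IsLeast
      {r : ℝ | ∃ q : Fin K → ℝ,
        (∀ i, 0 ≤ q i) ∧ ∑ i, q i = 1 ∧ r = ∑ i, max (q i - φ i) 0}
      ((∑ i, max (-φ i) 0) + max (1 - ∑ i, max (φ i) 0) 0) := by
  have : Nonempty (Fin K) := Fin.pos_iff_nonempty.mp hK
  refine ⟨?_, ?_⟩
  · obtain ⟨q, hq0, hq1, hval⟩ := exists_sum_eq_one_sum_max_sub_zero_eq φ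
    exact ⟨q, hq0, hq1, hval.symm⟩
  · rintro r ⟨q, hq0, hq1, rfl⟩
    exact sum_max_neg_zero_add_max_le_sum φ hq0 hq1
end

section
/- Let K ≥ 1 be an integer and φ ∈ ℝ^K. (i) If Σ_{i=1}^K (φ_i)^+ ≥ 1, then every q ∈ Δ_K with q(i) ≤ (φ_i)^+ for all i ∈ {1,…,K} satisfies Σ_{i=1}^K (q(i) − φ_i)^+ = Σ_{i=1}^K (−φ_i)^+, which equals inf_{q′∈Δ_K} Σ_{i=1}^K (q′(i) − φ_i)^+. (ii) If Σ_{i=1}^K (φ_i)^+ < 1, then every q ∈ Δ_K with q(i) ≥ (φ_i)^+ for all i ∈ {1,…,K} satisfies Σ_{i=1}^K (q(i) − φ_i)^+ = Σ_{i=1}^K (−φ_i)^+ + 1 − Σ_{i=1}^K (φ_i)^+, which equals inf_{q′∈Δ_K} Σ_{i=1}^K (q′(i) − φ_i)^+. -/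
/-- **Characterization of the minimizers found by the water-filling procedure.**
Let `K ≥ 1` and `φ ∈ ℝ^K`.
(i) If `Σ_i (φ_i)⁺ ≥ 1`, then every `q ∈ Δ_K` with `q(i) ≤ (φ_i)⁺` for all `i`
satisfies `Σ_i (q(i) - φ_i)⁺ = Σ_i (-φ_i)⁺`, which equals
`inf_{q' ∈ Δ_K} Σ_i (q'(i) - φ_i)⁺`.
(ii) If `Σ_i (φ_i)⁺ < 1`, then every `q ∈ Δ_K` with `q(i) ≥ (φ_i)⁺` for all `i`
satisfies `Σ_i (q(i) - φ_i)⁺ = Σ_i (-φ_i)⁺ + 1 - Σ_i (φ_i)⁺`, which equals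
`inf_{q' ∈ Δ_K} Σ_i (q'(i) - φ_i)⁺`. -/
theorem stmt12 (K : ℕ) (hK : 1 ≤ K) (φ : Fin K → ℝ) :
    ((1 ≤ ∑ i, max (φ i) 0) →
      ∀ q : Fin K → ℝ, (∀ i, 0 ≤ q i) → ∑ i, q i = 1 →
        (∀ i, q i ≤ max (φ i) 0) →
        (∑ i, max (q i - φ i) 0 = ∑ i, max (-φ i) 0 ∧
          ∑ i, max (q i - φ i) 0
            = sInf {r : ℝ | ∃ q' : Fin K → ℝ,
                (∀ i, 0 ≤ q' i) ∧ ∑ i, q' i = 1 ∧ r = ∑ i, max (q' i - φ i) 0})) ∧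
    ((∑ i, max (φ i) 0 < 1) →
      ∀ q : Fin K → ℝ, (∀ i, 0 ≤ q i) → ∑ i, q i = 1 →
        (∀ i, max (φ i) 0 ≤ q i) →
        (∑ i, max (q i - φ i) 0
            = (∑ i, max (-φ i) 0) + 1 - ∑ i, max (φ i) 0 ∧
          ∑ i, max (q i - φ i) 0
            = sInf {r : ℝ | ∃ q' : Fin K → ℝ,
                (∀ i, 0 ≤ q' i) ∧ ∑ i, q' i = 1 ∧ r = ∑ i, max (q' i - φ i) 0})) := by
  have key : ∀ (q : Fin K → ℝ), (∀ i, 0 ≤ q i) →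
      ∀ i, max (-φ i) 0 + q i - max (φ i) 0 ≤ max (q i - φ i) 0 := by
    intro q hq0 i
    have h1 : max (-φ i) 0 - max (φ i) 0 = -φ i := by
      rcases le_or_gt (φ i) 0 with h | h
      · rw [max_eq_left (by linarith), max_eq_right h]; ring
      · rw [max_eq_right (by linarith), max_eq_left h.le]; ring
    have h2 : q i - φ i ≤ max (q i - φ i) 0 := le_max_left _ _
    linarith
  have key2 : ∀ (q : Fin K → ℝ), (∀ i, 0 ≤ q i) →
      ∀ i, max (-φ i) 0 ≤ max (q i - φ i) 0 := by
    intro q hq0 i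
    exact max_le_max (by linarith [hq0 i]) le_rfl
  constructor
  · intro h1 q hq0 hqs hqle
    have hpt : ∀ i, max (q i - φ i) 0 = max (-φ i) 0 := by
      intro i
      rcases le_or_gt (φ i) 0 with h | h
      · have hq : q i = 0 := le_antisymm (by simpa [max_eq_right h] using hqle i) (hq0 i)
        simp [hq]
      · have hle : q i ≤ φ i := by simpa [max_eq_left h.le] using hqle i
        rw [max_eq_right (by linarith), max_eq_right (by linarith)]
    have heq : ∑ i, max (q i - φ i) 0 = ∑ i, max (-φ i) 0 :=
      Finset.sum_congr rfl fun i _ => hpt i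
    refine ⟨heq, ?_⟩
    have hlb : ∀ r ∈ {r : ℝ | ∃ q' : Fin K → ℝ,
        (∀ i, 0 ≤ q' i) ∧ ∑ i, q' i = 1 ∧ r = ∑ i, max (q' i - φ i) 0},
        ∑ i, max (q i - φ i) 0 ≤ r := by
      rintro r ⟨q', h0, hs, rfl⟩
      rw [heq]
      exact Finset.sum_le_sum fun i _ => key2 q' h0 i
    refine le_antisymm (le_csInf ⟨_, ⟨q, hq0, hqs, rfl⟩⟩ hlb) ?_
    exact csInf_le ⟨_, hlb⟩ ⟨q, hq0, hqs, rfl⟩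
  · intro h1 q hq0 hqs hqge
    have hpt : ∀ i, max (q i - φ i) 0 = max (-φ i) 0 + q i - max (φ i) 0 := by
      intro i
      have h2 : 0 ≤ q i - φ i := by
        have := hqge i; have := le_max_left (φ i) 0; linarith
      rw [max_eq_left h2]
      rcases le_or_gt (φ i) 0 with h | h
      · rw [max_eq_left (by linarith), max_eq_right h]; ring
      · rw [max_eq_right (by linarith), max_eq_left h.le]; ring
    have heq : ∑ i, max (q i - φ i) 0
        = (∑ i, max (-φ i) 0) + 1 - ∑ i, max (φ i) 0 := by
      calc ∑ i, max (q i - φ i) 0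
          = ∑ i, (max (-φ i) 0 + q i - max (φ i) 0) :=
            Finset.sum_congr rfl fun i _ => hpt i
        _ = (∑ i, max (-φ i) 0) + (∑ i, q i) - ∑ i, max (φ i) 0 := by
            rw [Finset.sum_sub_distrib, Finset.sum_add_distrib]
        _ = (∑ i, max (-φ i) 0) + 1 - ∑ i, max (φ i) 0 := by rw [hqs]
    refine ⟨heq, ?_⟩
    have hlb : ∀ r ∈ {r : ℝ | ∃ q' : Fin K → ℝ,
        (∀ i, 0 ≤ q' i) ∧ ∑ i, q' i = 1 ∧ r = ∑ i, max (q' i - φ i) 0},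
        ∑ i, max (q i - φ i) 0 ≤ r := by
      rintro r ⟨q', h0, hs, rfl⟩
      rw [heq]
      calc (∑ i, max (-φ i) 0) + 1 - ∑ i, max (φ i) 0
          = ∑ i, (max (-φ i) 0 + q' i - max (φ i) 0) := by
            rw [Finset.sum_sub_distrib, Finset.sum_add_distrib, hs]
        _ ≤ ∑ i, max (q' i - φ i) 0 :=
            Finset.sum_le_sum fun i _ => key q' h0 i
    refine le_antisymm (le_csInf ⟨_, ⟨q, hq0, hqs, rfl⟩⟩ hlb) ?_
    exact csInf_le ⟨_, hlb⟩ ⟨q, hq0, hqs, rfl⟩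
end

section
/- Let K ≥ 1 be an integer, L ≥ K a real number, and ψ_0, ψ_1, …, ψ_K ∈ ℝ. For i ∈ {1,…,K} set φ_i = (ψ_i − ψ_0)/L. Then for every q ∈ Δ_K, the supremum over all probability vectors (p(0), p(1), …, p(K)) with p(j) ≥ 0, Σ_{j=0}^K p(j) = 1, and p(i) ≤ 1/L for i ∈ {1,…,K}, of Σ_{i=1}^K p(i)·( L·q(i) − ψ_i ) − p(0)·ψ_0, equals −ψ_0 + Σ_{i=1}^K ( q(i) − φ_i )^+. Consequently, inf_{q∈Δ_K} of this supremum equals −ψ_0 + Σ_{i=1}^K (−φ_i)^+ + ( 1 − Σ_{i=1}^K (φ_i)^+ )^+, and q ∈ Δ_K attains this infimum if and only if q minimizes q ↦ Σ_{i=1}^K ( q(i) − φ_i )^+ over Δ_K. -/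
/-!
Since `ψ_i = ψ_0 + L φ_i`, on the constraint set the objective is
`-ψ_0 + Σ_i (L p(i)) (q(i) - φ_i)` with weights `L p(i) ∈ [0, 1]`, so it is at most
`-ψ_0 + Σ_i (q(i) - φ_i)⁺`; as `K / L ≤ 1`, saturating the caps exactly where `q(i) > φ_i`
(and putting the remaining mass on `p(0)`) attains this value.

On the simplex, `(q(i) - φ_i)⁺` dominates both `(-φ_i)⁺` and `(-φ_i)⁺ + q(i) - (φ_i)⁺`;
summing gives the lower bound `Σ (-φ_i)⁺ + (1 - Σ (φ_i)⁺)⁺`. It is attained by `φ⁺ / Σ φ⁺`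
when `Σ φ⁺ ≥ 1`, and otherwise by `φ⁺` with the missing mass added to one coordinate.
-/

/-- For a fixed `q ∈ Δ_K`, the set of values `Σ_i p(i) (L q(i) - ψ_i) - p(0) ψ_0`
over capped probability vectors `(p(0), p(1), …, p(K))` with `p(i) ≤ 1/L` for
`i ∈ {1,…,K}`. -/
def supSet (K : ℕ) (L : ℝ) (ψ0 : ℝ) (ψ : Fin K → ℝ) (q : Fin K → ℝ) : Set ℝ :=
  {r : ℝ | ∃ p0 : ℝ, ∃ p : Fin K → ℝ,
    0 ≤ p0 ∧ (∀ i, 0 ≤ p i) ∧ p0 + ∑ i, p i = 1 ∧ (∀ i, p i ≤ 1 / L) ∧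
    r = (∑ i, p i * (L * q i - ψ i)) - p0 * ψ0}

open Finset

section PosPart

variable {α : Type*} [AddCommGroup α] [LinearOrder α] [IsOrderedAddMonoid α]

lemma max_sub_zero_eq_max_neg_zero {x y : α} (hx0 : 0 ≤ x) (hx : x ≤ max y 0) :
    max (x - y) 0 = max (-y) 0 := by
  rcases le_total y 0 with hy | hy
  · rw [max_eq_right hy] at hx
    rw [le_antisymm hx hx0, zero_sub]
  · rw [max_eq_left hy] at hx
    rw [max_eq_right (sub_nonpos.2 hx), max_eq_right (neg_nonpos.2 hy)]

lemma max_sub_zero_eq_of_max_le {x y : α} (hx : max y 0 ≤ x) :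
    max (x - y) 0 = max (-y) 0 + (x - max y 0) := by
  rw [max_eq_left (sub_nonneg.2 ((le_max_left y 0).trans hx))]
  conv_lhs => rw [← max_zero_sub_max_neg_zero_eq_self y]
  abel

end PosPart

lemma mul_le_max_zero {α : Type*} [Semiring α] [LinearOrder α] [IsOrderedRing α] {t c : α} (ht0 : 0 ≤ t) (ht1 : t ≤ 1) : t * c ≤ max c 0 := by
  rcases le_total c 0 with hc | hc
  · exact (mul_nonpos_of_nonneg_of_nonpos ht0 hc).trans (le_max_right _ _)
  · exact (mul_le_of_le_one_left hc ht1).trans (le_max_left _ _)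

lemma IsLeast.apply_eq_iff_forall_le {α β : Type*} [PartialOrder β] {f : α → β} {S : Set α}
    {m : β} (hm : IsLeast (f '' S) m) {x : α} (hx : x ∈ S) :
    f x = m ↔ ∀ y ∈ S, f x ≤ f y := by
  refine ⟨fun h y hy => h ▸ hm.2 (Set.mem_image_of_mem f hy), fun h => ?_⟩
  obtain ⟨y, hy, rfl⟩ := hm.1
  exact le_antisymm (h y hy) (hm.2 (Set.mem_image_of_mem f hx))

section Simplex

variable {ι : Type*} [Fintype ι]

lemma sum_max_neg_zero_add_max_one_sub_le {φ q : ι → ℝ} (hq : q ∈ stdSimplex ℝ ι) :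
    (∑ i, max (-φ i) 0) + max (1 - ∑ i, max (φ i) 0) 0 ≤ ∑ i, max (q i - φ i) 0 := by
  obtain ⟨hq0, hq1⟩ := hq
  have hneg : ∑ i, max (-φ i) 0 ≤ ∑ i, max (q i - φ i) 0 :=
    sum_le_sum fun i _ => max_le_max_right 0 (by linarith [hq0 i])
  have hlin : ∑ i, (max (-φ i) 0 + (q i - max (φ i) 0)) ≤ ∑ i, max (q i - φ i) 0 :=
    sum_le_sum fun i _ => by
      linarith [le_max_left (q i - φ i) 0, max_zero_sub_max_neg_zero_eq_self (φ i)]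
  rw [sum_add_distrib, sum_sub_distrib, hq1] at hlin
  rcases le_total (1 - ∑ i, max (φ i) 0) 0 with h | h
  · rwa [max_eq_right h, add_zero]
  · rwa [max_eq_left h]

lemma exists_mem_stdSimplex_sum_max_sub_eq [Nonempty ι] (φ : ι → ℝ) :
    ∃ q ∈ stdSimplex ℝ ι,
      ∑ i, max (q i - φ i) 0 = (∑ i, max (-φ i) 0) + max (1 - ∑ i, max (φ i) 0) 0 := by
  classical
  set B := ∑ i, max (φ i) 0 with hB
  rcases le_total 1 B with h1B | hB1
  · refine ⟨fun i => max (φ i) 0 / B, ⟨fun i => by positivity, ?_⟩, ?_⟩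
    · rw [← sum_div, div_self (by linarith)]
    · rw [max_eq_right (sub_nonpos.2 h1B), add_zero]
      exact sum_congr rfl fun i _ =>
        max_sub_zero_eq_max_neg_zero (by positivity) (div_le_self (le_max_right _ _) h1B)
  · obtain ⟨i₀⟩ := ‹Nonempty ι›
    have hle : ∀ i, max (φ i) 0 ≤ max (φ i) 0 + (Pi.single i₀ (1 - B) : ι → ℝ) i := fun i =>
      le_add_of_nonneg_right (by rw [Pi.single_apply]; split_ifs <;> linarith)
    refine ⟨fun i => max (φ i) 0 + (Pi.single i₀ (1 - B) : ι → ℝ) i,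
      ⟨fun i => (le_max_right _ _).trans (hle i), ?_⟩, ?_⟩
    · simp [sum_add_distrib, ← hB]
    · rw [sum_congr rfl fun i _ => max_sub_zero_eq_of_max_le (hle i)]
      simp [sum_add_distrib, max_eq_left (sub_nonneg.2 hB1)]

theorem isLeast_image_stdSimplex_sum_max_sub [Nonempty ι] (φ : ι → ℝ) :
    IsLeast ((fun q => ∑ i, max (q i - φ i) 0) '' stdSimplex ℝ ι)
      ((∑ i, max (-φ i) 0) + max (1 - ∑ i, max (φ i) 0) 0) := by
  obtain ⟨q, hq, hqM⟩ := exists_mem_stdSimplex_sum_max_sub_eq φ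
  refine ⟨⟨q, hq, hqM⟩, ?_⟩
  rintro _ ⟨q', hq', rfl⟩
  exact sum_max_neg_zero_add_max_one_sub_le hq'

end Simplex

section CappedProgram

variable {K : ℕ} {L ψ0 : ℝ} {ψ φ : Fin K → ℝ}

lemma supSet_objective_eq (hL : L ≠ 0) (hφ : ∀ i, φ i = (ψ i - ψ0) / L) (q : Fin K → ℝ)
    {p0 : ℝ} {p : Fin K → ℝ} (hp : p0 + ∑ i, p i = 1) :
    (∑ i, p i * (L * q i - ψ i)) - p0 * ψ0 = -ψ0 + ∑ i, (p i * L) * (q i - φ i) := by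
  have hterm : ∀ i, p i * (L * q i - ψ i) = (p i * L) * (q i - φ i) - p i * ψ0 := fun i => by
    rw [hφ i]; field_simp; ring
  rw [sum_congr rfl fun i _ => hterm i, sum_sub_distrib, ← sum_mul, eq_sub_of_add_eq' hp]
  ring

theorem isGreatest_supSet (hL0 : 0 < L) (hKL : (K : ℝ) ≤ L) (hφ : ∀ i, φ i = (ψ i - ψ0) / L)
    (q : Fin K → ℝ) :
    IsGreatest (supSet K L ψ0 ψ q) (-ψ0 + ∑ i, max (q i - φ i) 0) := by
  constructor
  · let p : Fin K → ℝ := fun i => if 0 < q i - φ i then 1 / L else 0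
    have hp0 : ∀ i, 0 ≤ p i := fun i => by dsimp [p]; split_ifs <;> positivity
    have hpL : ∀ i, p i ≤ 1 / L := fun i => by dsimp [p]; split_ifs; exacts [le_rfl, by positivity]
    have hsum : ∑ i, p i ≤ 1 :=
      calc ∑ i, p i ≤ ∑ _i : Fin K, 1 / L := sum_le_sum fun i _ => hpL i
        _ = K / L := by simp [div_eq_mul_inv]
        _ ≤ 1 := (div_le_one hL0).2 hKL
    refine ⟨1 - ∑ i, p i, p, sub_nonneg.2 hsum, hp0, sub_add_cancel _ _, hpL, ?_⟩
    rw [supSet_objective_eq hL0.ne' hφ q (sub_add_cancel _ _)]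
    refine congrArg _ (sum_congr rfl fun i _ => ?_)
    dsimp [p]
    split_ifs with h
    · rw [one_div_mul_cancel hL0.ne', one_mul, max_eq_left h.le]
    · rw [zero_mul, zero_mul, max_eq_right (not_lt.1 h)]
  · rintro _ ⟨p0, p, -, hp0, hsum, hpL, rfl⟩
    rw [supSet_objective_eq hL0.ne' hφ q hsum]
    exact (add_le_add_iff_left _).2 (sum_le_sum fun i _ =>
      mul_le_max_zero (mul_nonneg (hp0 i) hL0.le) ((le_div_iff₀ hL0).1 (hpL i)))

end CappedProgram

/-- **Reduction of the minimax problem to a piecewise-linear program.**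
Let `K ≥ 1`, `L ≥ K`, `ψ_0, ψ_1, …, ψ_K ∈ ℝ` and `φ_i = (ψ_i - ψ_0)/L`. Then for
every `q ∈ Δ_K`, the supremum over capped probability vectors of
`Σ_i p(i) (L q(i) - ψ_i) - p(0) ψ_0` equals `-ψ_0 + Σ_i (q(i) - φ_i)⁺`;
consequently the infimum over `q ∈ Δ_K` of this supremum equals
`-ψ_0 + Σ_i (-φ_i)⁺ + (1 - Σ_i (φ_i)⁺)⁺`, and `q` attains this infimum if and only
if `q` minimizes `q ↦ Σ_i (q(i) - φ_i)⁺` over `Δ_K`. -/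
theorem stmt13 (K : ℕ) (hK : 1 ≤ K) (L : ℝ) (hL : (K : ℝ) ≤ L)
    (ψ0 : ℝ) (ψ : Fin K → ℝ) (φ : Fin K → ℝ) (hφ : ∀ i, φ i = (ψ i - ψ0) / L) :
    (∀ q : Fin K → ℝ, (∀ i, 0 ≤ q i) → ∑ i, q i = 1 →
      sSup (supSet K L ψ0 ψ q) = -ψ0 + ∑ i, max (q i - φ i) 0) ∧
    sInf {r : ℝ | ∃ q : Fin K → ℝ,
        (∀ i, 0 ≤ q i) ∧ ∑ i, q i = 1 ∧ r = sSup (supSet K L ψ0 ψ q)}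
      = -ψ0 + (∑ i, max (-φ i) 0) + max (1 - ∑ i, max (φ i) 0) 0 ∧
    (∀ q : Fin K → ℝ, (∀ i, 0 ≤ q i) → ∑ i, q i = 1 →
      (sSup (supSet K L ψ0 ψ q)
          = -ψ0 + (∑ i, max (-φ i) 0) + max (1 - ∑ i, max (φ i) 0) 0
        ↔ ∀ q' : Fin K → ℝ, (∀ i, 0 ≤ q' i) → ∑ i, q' i = 1 →
            ∑ i, max (q i - φ i) 0 ≤ ∑ i, max (q' i - φ i) 0)) := by
  have hL0 : 0 < L := lt_of_lt_of_le (by exact_mod_cast hK) hL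
  have hsup : ∀ q, sSup (supSet K L ψ0 ψ q) = -ψ0 + ∑ i, max (q i - φ i) 0 := fun q =>
    (isGreatest_supSet hL0 hL hφ q).csSup_eq
  have : Nonempty (Fin K) := ⟨⟨0, hK⟩⟩
  have hmin := isLeast_image_stdSimplex_sum_max_sub φ
  refine ⟨fun q _ _ => hsup q, IsLeast.csInf_eq ⟨?_, ?_⟩, fun q hq0 hq1 => ?_⟩
  · obtain ⟨q, ⟨hq0, hq1⟩, hqM⟩ := hmin.1
    exact ⟨q, hq0, hq1, by rw [hsup, add_assoc, ← hqM]⟩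
  · rintro _ ⟨q, hq0, hq1, rfl⟩
    rw [hsup, add_assoc]
    exact (add_le_add_iff_left _).2 (hmin.2 ⟨q, ⟨hq0, hq1⟩, rfl⟩)
  · rw [hsup, add_assoc, add_right_inj, hmin.apply_eq_iff_forall_le ⟨hq0, hq1⟩]
    exact ⟨fun h q' hq'0 hq'1 => h q' ⟨hq'0, hq'1⟩, fun h q' hq' => h q' hq'.1 hq'.2⟩
end
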